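/- The ℓ2-clipping function f(r) = r · min(1, C/‖r‖₂) is a fixed point of both x = (−2C/3, −2C/3) and y = (2C/3, 2C/3) in ℝ², and exp((ε/(2C)) · ‖f(x) − f(y)‖₁) = exp(4ε/3) > exp(ε) for every ε > 0. -/

import Mathlib

open Real

section Clipping

variable {ι : Type*} [Fintype ι]

noncomputable def clip (C : ℝ) (r : ι → ℝ) : ι → ℝ :=
  if r = 0 then 0 else fun i => r i * min 1 (C / √(∑ j, r j ^ 2))

theorem clip_eq_self {C : ℝ} {r : ι → ℝ} (hr : √(∑ j, r j ^ 2) ≤ C) : clip C r = r := by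
  by_cases h0 : r = 0
  · simp [clip, h0]
  have hpos : 0 < ∑ j, r j ^ 2 := by
    refine lt_of_le_of_ne (Finset.sum_nonneg fun j _ => sq_nonneg (r j)) (Ne.symm ?_)
    intro hsum
    refine h0 (funext fun j => ?_)
    have := (Finset.sum_eq_zero_iff_of_nonneg fun j _ => sq_nonneg (r j)).1 hsum j
      (Finset.mem_univ j)
    simpa using this
  have hmin : min 1 (C / √(∑ j, r j ^ 2)) = 1 :=
    min_eq_left ((one_le_div (sqrt_pos.2 hpos)).2 hr)
  simp [clip, h0, hmin]

theorem clip_const_eq_self {C c : ℝ} (hC : 0 ≤ C) (hc : Fintype.card ι * c ^ 2 ≤ C ^ 2) :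
    clip C (fun _ : ι => c) = fun _ => c :=
  clip_eq_self <| (sqrt_le_left hC).2 <| by simpa using hc

end Clipping

theorem dp_bound_violation (C ε : ℝ) (hC : 0 < C) (hε : 0 < ε)
    (f : (Fin 2 → ℝ) → (Fin 2 → ℝ))
    (hf : ∀ r : Fin 2 → ℝ, f r =
      if r = 0 then 0
      else fun i => r i * min 1 (C / Real.sqrt (∑ j, (r j) ^ 2)))
    (x y : Fin 2 → ℝ)
    (hx : x = fun _ => -(2 * C / 3)) (hy : y = fun _ => 2 * C / 3) :
    f x = x ∧ f y = y ∧
    Real.exp (ε / (2 * C) * ∑ i, |f x i - f y i|) = Real.exp (4 * ε / 3) ∧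
    Real.exp (4 * ε / 3) > Real.exp ε := by
  have hclip : f = clip C := funext hf
  have hinside : (Fintype.card (Fin 2) : ℝ) * (2 * C / 3) ^ 2 ≤ C ^ 2 := by
    norm_num; nlinarith
  have hfx : f x = x := by
    rw [hclip, hx]; exact clip_const_eq_self hC.le (by simpa using hinside)
  have hfy : f y = y := by
    rw [hclip, hy]; exact clip_const_eq_self hC.le hinside
  refine ⟨hfx, hfy, ?_, exp_lt_exp.2 (by linarith)⟩
  rw [hfx, hfy, hx, hy, Fin.sum_univ_two, abs_of_neg (by linarith)]
  congr 1
  field_simp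
  ring
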